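/- Let M ∈ ℝ^{n₁×n₂} have rank r with compact singular value decomposition M = UΣVᵀ, where U ∈ ℝ^{n₁×r} and V ∈ ℝ^{n₂×r} have orthonormal columns and Σ is an r×r diagonal matrix with positive diagonal entries. Let Ω ⊆ {1,…,n₁}×{1,…,n₂} and let P_Ω be the sampling operator that keeps entries with indices in Ω and sets the rest to zero. Let T⊥ = { Z ∈ ℝ^{n₁×n₂} : UᵀZ = 0 and ZV = 0 } and let T be the orthogonal complement of T⊥ in ℝ^{n₁×n₂} with respect to the Frobenius inner product ⟨A,B⟩ = tr(AᵀB). Suppose: (1) there exists Y ∈ ℝ^{n₁×n₂} with P_Ω(Y) = Y and Y = UVᵀ + W for some W ∈ T⊥ with spectral norm ‖W‖ < 1; and (2) the only matrix Z ∈ T with P_Ω(Z) = 0 is Z = 0. Then for every X ∈ ℝ^{n₁×n₂} with X ≠ M and P_Ω(X) = P_Ω(M), one has ‖X‖_* > ‖M‖_*; in particular, M is the unique minimizer of the nuclear norm over { X : P_Ω(X) = P_Ω(M) }. -/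

import Mathlib

/-!
Write `Z = X - M` and let `Z₂ = (1 - UUᵀ) Z (1 - VVᵀ)` be its component in `T⊥`. Every `B` of
operator norm at most one bounds the nuclear norm from below, `tr(Bᵀ A) ≤ ‖A‖_*`, and for an SVD
`A = U' diag(s) V'ᵀ` the choice `B = U' V'ᵀ` attains it. Take `B = UVᵀ + Q` with `Q ∈ T⊥` a
contraction satisfying `tr(Qᵀ Z₂) = ‖Z₂‖_*`; since `UVᵀ` and `Q` act on orthogonal row and column
spaces, `‖B‖ ≤ 1`. As `Y` lives on `Ω` and `Z` vanishes there, `tr(Yᵀ Z) = 0`, whence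
`‖X‖_* ≥ tr(Bᵀ M) + tr(Bᵀ Z) = ‖M‖_* + ‖Z₂‖_* - tr(Wᵀ Z₂) ≥ ‖M‖_* + (1 - ‖W‖) ‖Z₂‖_*`.
Finally `Z₂ ≠ 0`: otherwise `Z ∈ T`, and injectivity of `P_Ω` on `T` forces `Z = 0`.
-/

open Matrix

/-- The singular values of `X` (unordered). -/
noncomputable def singularValues {n₁ n₂ : ℕ} (X : Matrix (Fin n₁) (Fin n₂) ℝ) : Fin n₂ → ℝ :=
  fun i => Real.sqrt ((show (Xᵀ * X).IsHermitian by
    rw [IsHermitian, conjTranspose_eq_transpose_of_trivial, transpose_mul, transpose_transpose]).eigenvalues i)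

/-- The nuclear norm: sum of the singular values. -/
noncomputable def nuclearNorm {n₁ n₂ : ℕ} (X : Matrix (Fin n₁) (Fin n₂) ℝ) : ℝ :=
  ∑ i, singularValues X i

/-- The spectral norm: the largest singular value. -/
noncomputable def matSpectralNorm {n₁ n₂ : ℕ} (X : Matrix (Fin n₁) (Fin n₂) ℝ) : ℝ :=
  ⨆ i, singularValues X i

open scoped Matrix.Norms.L2Operator

namespace Matrix

theorem isHermitian_transpose_mul_self {m n : Type*} [Fintype m] (A : Matrix m n ℝ) :
    (Aᵀ * A).IsHermitian := by
  simpa using isHermitian_conjTranspose_mul_self A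

variable {m n k : Type*} [Fintype m] [Fintype n] [Fintype k]

theorem l2_opNorm_transpose [DecidableEq m] [DecidableEq n] (A : Matrix m n ℝ) :
    ‖Aᵀ‖ = ‖A‖ := by
  simpa using l2_opNorm_conjTranspose A

theorem apply_le_l2_opNorm [DecidableEq n] (A : Matrix m n ℝ) (i : m) (j : n) : A i j ≤ ‖A‖ :=
  calc A i j ≤ ‖(WithLp.toLp 2 (A *ᵥ Pi.single j 1) : EuclideanSpace ℝ m)‖ := by
        simpa using (le_abs_self _).trans
          (PiLp.norm_apply_le (WithLp.toLp 2 (A *ᵥ Pi.single j 1)) i)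
    _ ≤ ‖A‖ * ‖(WithLp.toLp 2 (Pi.single j 1) : EuclideanSpace ℝ n)‖ :=
        l2_opNorm_mulVec A (WithLp.toLp 2 (Pi.single j 1))
    _ = ‖A‖ := by simp

theorem dotProduct_transpose_mul_self_mulVec (A : Matrix m n ℝ) (x : n → ℝ) :
    x ⬝ᵥ (Aᵀ * A) *ᵥ x = (A *ᵥ x) ⬝ᵥ (A *ᵥ x) := by
  rw [← mulVec_mulVec, dotProduct_mulVec, vecMul_transpose]

theorem norm_toLp_sq (x : n → ℝ) :
    ‖(WithLp.toLp 2 x : EuclideanSpace ℝ n)‖ ^ 2 = x ⬝ᵥ x := by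
  rw [EuclideanSpace.real_norm_sq_eq]
  simp [dotProduct, sq]

theorem l2_opNorm_le_one_iff_posSemidef [DecidableEq n] (A : Matrix m n ℝ) :
    ‖A‖ ≤ 1 ↔ (1 - Aᵀ * A).PosSemidef := by
  have hHerm : (1 - Aᵀ * A).IsHermitian :=
    isHermitian_one.sub (by simpa using isHermitian_conjTranspose_mul_self A)
  rw [l2_opNorm_def, ContinuousLinearMap.opNorm_le_iff zero_le_one,
    posSemidef_iff_dotProduct_mulVec, ← (WithLp.equiv 2 (n → ℝ)).symm.forall_congr_right]
  simp only [hHerm, true_and, one_mul, star_trivial]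
  refine forall_congr' fun x => ?_
  rw [sub_mulVec, one_mulVec, dotProduct_sub, dotProduct_transpose_mul_self_mulVec, sub_nonneg,
    ← pow_le_pow_iff_left₀ (norm_nonneg _) (norm_nonneg _) two_ne_zero]
  simp [norm_toLp_sq]

theorem l2_opNorm_le_one_of_transpose_mul_self_eq_diagonal [DecidableEq k] {U : Matrix m k ℝ}
    {d : k → ℝ} (hU : Uᵀ * U = diagonal d) (hd : ∀ i, |d i| ≤ 1) : ‖U‖ ≤ 1 := by
  have h : ‖U‖ * ‖U‖ ≤ 1 := by
    rw [← l2_opNorm_conjTranspose_mul_self, conjTranspose_eq_transpose_of_trivial, hU,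
      l2_opNorm_diagonal]
    exact (pi_norm_le_iff_of_nonneg zero_le_one).2 hd
  nlinarith [norm_nonneg U]

theorem l2_opNorm_le_one_of_transpose_mul_self_eq_one [DecidableEq k] {U : Matrix m k ℝ}
    (hU : Uᵀ * U = 1) : ‖U‖ ≤ 1 :=
  l2_opNorm_le_one_of_transpose_mul_self_eq_diagonal (d := 1)
    (by rw [hU]; exact diagonal_one.symm) fun _ => by simp

theorem l2_opNorm_mul_transpose_le_one [DecidableEq n] [DecidableEq k] {U : Matrix m k ℝ}
    {V : Matrix n k ℝ} (hU : ‖U‖ ≤ 1) (hV : ‖V‖ ≤ 1) : ‖U * Vᵀ‖ ≤ 1 :=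
  (l2_opNorm_mul U Vᵀ).trans (mul_le_one₀ hU (norm_nonneg _) (l2_opNorm_transpose V ▸ hV))

theorem l2_opNorm_one_sub_mul_transpose_le_one [DecidableEq m] [DecidableEq k] {U : Matrix m k ℝ}
    (hU : Uᵀ * U = 1) : ‖1 - U * Uᵀ‖ ≤ 1 := by
  rw [l2_opNorm_le_one_iff_posSemidef]
  have hgram : 1 - (1 - U * Uᵀ)ᵀ * (1 - U * Uᵀ) = U * Uᵀ := by
    simp only [transpose_sub, transpose_one, transpose_mul, transpose_transpose, Matrix.mul_sub,
      Matrix.sub_mul, Matrix.one_mul, Matrix.mul_one, Matrix.mul_assoc]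
    rw [← Matrix.mul_assoc Uᵀ, hU, Matrix.one_mul]
    abel
  rw [hgram]
  simpa only [conjTranspose_eq_transpose_of_trivial] using posSemidef_self_mul_conjTranspose U

theorem l2_opNorm_mul_transpose_add_le_one [DecidableEq n] [DecidableEq k] {U : Matrix m k ℝ}
    {V : Matrix n k ℝ} {Q : Matrix m n ℝ}
    (hU : Uᵀ * U = 1) (hV : Vᵀ * V = 1) (hQ : ‖Q‖ ≤ 1) (hUQ : Uᵀ * Q = 0) (hQV : Q * V = 0) :
    ‖U * Vᵀ + Q‖ ≤ 1 := by
  set P := V * Vᵀ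
  have hPt : Pᵀ = P := by rw [transpose_mul, transpose_transpose]
  have hP : P * P = P := by rw [Matrix.mul_assoc, ← Matrix.mul_assoc Vᵀ, hV, Matrix.one_mul]
  have hQP : Q * P = 0 := by rw [← Matrix.mul_assoc, hQV, Matrix.zero_mul]
  have hPQ : P * Qᵀ = 0 := by rw [← hPt, ← transpose_mul, hQP, transpose_zero]
  have hB : (U * Vᵀ + Q)ᵀ * (U * Vᵀ + Q) = P + Qᵀ * Q := by
    have hQU : Qᵀ * U = 0 := by rw [← transpose_transpose U, ← transpose_mul, hUQ, transpose_zero]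
    rw [transpose_add, transpose_mul, transpose_transpose, Matrix.add_mul, Matrix.mul_add,
      Matrix.mul_add, Matrix.mul_assoc, ← Matrix.mul_assoc Uᵀ U, hU, Matrix.one_mul,
      Matrix.mul_assoc V, hUQ, Matrix.mul_zero, ← Matrix.mul_assoc Qᵀ, hQU, Matrix.zero_mul,
      add_zero, zero_add]
  have hgram : (1 - P)ᵀ * (1 - Qᵀ * Q) * (1 - P) = 1 - (U * Vᵀ + Q)ᵀ * (U * Vᵀ + Q) := by
    rw [hB, transpose_sub, transpose_one, hPt]
    simp only [Matrix.mul_sub, Matrix.sub_mul, Matrix.mul_one, Matrix.one_mul, ← Matrix.mul_assoc,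
      hP, hPQ, Matrix.zero_mul]
    rw [Matrix.mul_assoc Qᵀ Q P, hQP, Matrix.mul_zero]
    abel
  rw [l2_opNorm_le_one_iff_posSemidef, ← hgram]
  simpa only [conjTranspose_eq_transpose_of_trivial] using
    ((l2_opNorm_le_one_iff_posSemidef Q).1 hQ).conjTranspose_mul_mul_same (1 - P)

theorem trace_transpose_mul_le [DecidableEq m] [DecidableEq n] [DecidableEq k] (C : Matrix m n ℝ)
    (U : Matrix m k ℝ) (V : Matrix n k ℝ) {σ : k → ℝ} (hσ : ∀ i, 0 ≤ σ i) :
    (Cᵀ * (U * diagonal σ * Vᵀ)).trace ≤ ‖C‖ * ‖U‖ * ‖V‖ * ∑ i, σ i := by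
  have hbound : ‖Vᵀ * Cᵀ * U‖ ≤ ‖C‖ * ‖U‖ * ‖V‖ :=
    calc ‖Vᵀ * Cᵀ * U‖ ≤ ‖Vᵀ‖ * ‖Cᵀ‖ * ‖U‖ :=
          (l2_opNorm_mul _ _).trans (mul_le_mul_of_nonneg_right (l2_opNorm_mul _ _) (norm_nonneg _))
      _ = ‖C‖ * ‖U‖ * ‖V‖ := by rw [l2_opNorm_transpose, l2_opNorm_transpose]; ring
  calc (Cᵀ * (U * diagonal σ * Vᵀ)).trace = (Vᵀ * Cᵀ * U * diagonal σ).trace := by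
        rw [← Matrix.mul_assoc, trace_mul_cycle, ← Matrix.mul_assoc]
    _ = ∑ i, (Vᵀ * Cᵀ * U) i i * σ i := by simp [trace, mul_diagonal]
    _ ≤ ∑ i, ‖C‖ * ‖U‖ * ‖V‖ * σ i := Finset.sum_le_sum fun i _ =>
        mul_le_mul_of_nonneg_right ((apply_le_l2_opNorm _ i i).trans hbound) (hσ i)
    _ = ‖C‖ * ‖U‖ * ‖V‖ * ∑ i, σ i := by rw [Finset.mul_sum]

theorem trace_transpose_mul_transpose_mul_diagonal_mul [DecidableEq k] {U : Matrix m k ℝ}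
    {V : Matrix n k ℝ} {σ : k → ℝ}
    (hU : Uᵀ * U * diagonal σ = diagonal σ) (hV : Vᵀ * V = 1) :
    ((U * Vᵀ)ᵀ * (U * diagonal σ * Vᵀ)).trace = ∑ i, σ i := by
  rw [transpose_mul, transpose_transpose, Matrix.mul_assoc, trace_mul_comm, Matrix.mul_assoc,
    Matrix.mul_assoc (U * diagonal σ), hV, Matrix.mul_one, ← Matrix.mul_assoc, hU, trace_diagonal]

theorem mul_diagonal_inv_mul_diagonal [DecidableEq k] {B : Matrix m k ℝ} {s : k → ℝ}
    (hB : Bᵀ * B = diagonal fun j => s j ^ 2) :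
    B * diagonal s⁻¹ * diagonal s = B := by
  ext i j
  rw [Matrix.mul_assoc, diagonal_mul_diagonal, mul_diagonal]
  by_cases hs : s j = 0
  · have hcol : ∑ l, B l j ^ 2 = 0 := by
      simpa [mul_apply, sq, hs] using congrFun (congrFun hB j) j
    have := (Finset.sum_eq_zero_iff_of_nonneg fun l _ => sq_nonneg (B l j)).1 hcol i
      (Finset.mem_univ _)
    simp [pow_eq_zero_iff two_ne_zero |>.1 this]
  · simp [hs]

end Matrix

section NuclearNorm

variable {m n : ℕ}

theorem singularValues_sq (A : Matrix (Fin m) (Fin n) ℝ) (i : Fin n) :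
    singularValues A i ^ 2 = (isHermitian_transpose_mul_self A).eigenvalues i :=
  Real.sq_sqrt (by simpa using (posSemidef_conjTranspose_mul_self A).eigenvalues_nonneg i)

theorem singularValues_nonneg (A : Matrix (Fin m) (Fin n) ℝ) (i : Fin n) :
    0 ≤ singularValues A i :=
  Real.sqrt_nonneg _

theorem exists_svd (A : Matrix (Fin m) (Fin n) ℝ) :
    ∃ (U : Matrix (Fin m) (Fin n) ℝ) (V : Matrix (Fin n) (Fin n) ℝ), ‖U‖ ≤ 1 ∧
      Uᵀ * U * diagonal (singularValues A) = diagonal (singularValues A) ∧ Vᵀ * V = 1 ∧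
      A = U * diagonal (singularValues A) * Vᵀ := by
  set hA := isHermitian_transpose_mul_self A
  set s := singularValues A
  set P : Matrix (Fin n) (Fin n) ℝ := (hA.eigenvectorUnitary : Matrix (Fin n) (Fin n) ℝ)
  have hPP : Pᵀ * P = 1 := by
    simpa [P, star_eq_conjTranspose] using (mem_unitaryGroup_iff'.1 hA.eigenvectorUnitary.2)
  have hPP' : P * Pᵀ = 1 := by
    simpa [P, star_eq_conjTranspose] using (mem_unitaryGroup_iff.1 hA.eigenvectorUnitary.2)
  have hspec : Aᵀ * A = P * diagonal (fun i => s i ^ 2) * Pᵀ := by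
    conv_lhs => rw [hA.spectral_theorem]
    simp [P, s, singularValues_sq, star_eq_conjTranspose, RCLike.ofReal_real_eq_id]
  have hB : (A * P)ᵀ * (A * P) = diagonal fun i => s i ^ 2 := by
    rw [transpose_mul, Matrix.mul_assoc, ← Matrix.mul_assoc Aᵀ, hspec]
    simp only [Matrix.mul_assoc]
    rw [hPP, Matrix.mul_one, ← Matrix.mul_assoc, hPP, Matrix.one_mul]
  have hUU : (A * P * diagonal s⁻¹)ᵀ * (A * P * diagonal s⁻¹) =
      diagonal fun i => (s i)⁻¹ * s i ^ 2 * (s i)⁻¹ := by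
    rw [transpose_mul, diagonal_transpose, Matrix.mul_assoc, ← Matrix.mul_assoc (A * P)ᵀ, hB,
      diagonal_mul_diagonal, diagonal_mul_diagonal]
    congr 1
    ext i
    simp only [Pi.inv_apply]
    ring
  -- `P` diagonalises `Aᵀ A`; where `s i = 0` we get `(s i)⁻¹ = 0`, so `U` has a zero column
  -- there, matching the zero column of `A * P`.
  refine ⟨A * P * diagonal s⁻¹, P, ?_, ?_, hPP, ?_⟩
  · refine l2_opNorm_le_one_of_transpose_mul_self_eq_diagonal hUU fun i => ?_
    by_cases hs : s i = 0
    · simp [hs]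
    · rw [show (s i)⁻¹ * s i ^ 2 * (s i)⁻¹ = 1 by field_simp, abs_one]
  · rw [hUU, diagonal_mul_diagonal]
    congr 1
    ext i
    by_cases hs : s i = 0 <;> field_simp [hs]
  · rw [mul_diagonal_inv_mul_diagonal hB, Matrix.mul_assoc, hPP', Matrix.mul_one]

theorem nuclearNorm_nonneg (A : Matrix (Fin m) (Fin n) ℝ) : 0 ≤ nuclearNorm A :=
  Finset.sum_nonneg fun i _ => singularValues_nonneg A i

theorem trace_transpose_mul_le_l2_opNorm_mul_nuclearNorm (C A : Matrix (Fin m) (Fin n) ℝ) :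
    (Cᵀ * A).trace ≤ ‖C‖ * nuclearNorm A := by
  obtain ⟨U, V, hU, -, hV, hA⟩ := exists_svd A
  calc (Cᵀ * A).trace ≤ ‖C‖ * ‖U‖ * ‖V‖ * nuclearNorm A := by
        conv_lhs => rw [hA]
        exact trace_transpose_mul_le C U V (singularValues_nonneg A)
    _ ≤ ‖C‖ * 1 * 1 * nuclearNorm A := by
        have := nuclearNorm_nonneg A
        gcongr
        exact l2_opNorm_le_one_of_transpose_mul_self_eq_one hV
    _ = ‖C‖ * nuclearNorm A := by ring

theorem exists_l2_opNorm_le_one_trace_eq_nuclearNorm (A : Matrix (Fin m) (Fin n) ℝ) :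
    ∃ Q : Matrix (Fin m) (Fin n) ℝ, ‖Q‖ ≤ 1 ∧ (Qᵀ * A).trace = nuclearNorm A := by
  obtain ⟨U, V, hU, hUU, hV, hA⟩ := exists_svd A
  refine ⟨U * Vᵀ, l2_opNorm_mul_transpose_le_one hU
    (l2_opNorm_le_one_of_transpose_mul_self_eq_one hV), ?_⟩
  conv_lhs => rw [hA]
  exact trace_transpose_mul_transpose_mul_diagonal_mul hUU hV

theorem l2_opNorm_le_matSpectralNorm (W : Matrix (Fin m) (Fin n) ℝ) :
    ‖W‖ ≤ matSpectralNorm W := by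
  obtain ⟨U, V, hU, -, hV, hW⟩ := exists_svd W
  have hs : ‖singularValues W‖ ≤ matSpectralNorm W :=
    (pi_norm_le_iff_of_nonneg (Real.iSup_nonneg (singularValues_nonneg W))).2 fun i => by
      rw [Real.norm_of_nonneg (singularValues_nonneg W i)]
      exact le_ciSup (Set.finite_range _).bddAbove i
  calc ‖W‖ ≤ ‖U‖ * ‖diagonal (singularValues W)‖ * ‖Vᵀ‖ := by
        conv_lhs => rw [hW]
        exact (l2_opNorm_mul _ _).trans
          (mul_le_mul_of_nonneg_right (l2_opNorm_mul _ _) (norm_nonneg _))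
    _ ≤ 1 * matSpectralNorm W * 1 := by
        rw [l2_opNorm_diagonal, l2_opNorm_transpose]
        have hV' := l2_opNorm_le_one_of_transpose_mul_self_eq_one hV
        have h0 : 0 ≤ matSpectralNorm W := (norm_nonneg _).trans hs
        gcongr
    _ = matSpectralNorm W := by ring

theorem nuclearNorm_mul_diagonal_mul_transpose {k : Type*} [Fintype k] [DecidableEq k]
    {U : Matrix (Fin m) k ℝ} {V : Matrix (Fin n) k ℝ} {σ : k → ℝ} (hU : Uᵀ * U = 1)
    (hV : Vᵀ * V = 1) (hσ : ∀ i, 0 ≤ σ i) : nuclearNorm (U * diagonal σ * Vᵀ) = ∑ i, σ i := by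
  have hU₁ := l2_opNorm_le_one_of_transpose_mul_self_eq_one hU
  have hV₁ := l2_opNorm_le_one_of_transpose_mul_self_eq_one hV
  have hσsum : 0 ≤ ∑ i, σ i := Finset.sum_nonneg fun i _ => hσ i
  obtain ⟨Q, hQ, hQA⟩ := exists_l2_opNorm_le_one_trace_eq_nuclearNorm (U * diagonal σ * Vᵀ)
  refine le_antisymm ?_ ?_
  · calc nuclearNorm (U * diagonal σ * Vᵀ) ≤ ‖Q‖ * ‖U‖ * ‖V‖ * ∑ i, σ i :=
          hQA ▸ trace_transpose_mul_le Q U V hσ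
      _ ≤ 1 * 1 * 1 * ∑ i, σ i := by gcongr
      _ = ∑ i, σ i := by ring
  · calc ∑ i, σ i = ((U * Vᵀ)ᵀ * (U * diagonal σ * Vᵀ)).trace :=
          (trace_transpose_mul_transpose_mul_diagonal_mul (by rw [hU, Matrix.one_mul]) hV).symm
      _ ≤ ‖U * Vᵀ‖ * nuclearNorm (U * diagonal σ * Vᵀ) :=
          trace_transpose_mul_le_l2_opNorm_mul_nuclearNorm _ _
      _ ≤ nuclearNorm (U * diagonal σ * Vᵀ) :=
          mul_le_of_le_one_left (nuclearNorm_nonneg _) (l2_opNorm_mul_transpose_le_one hU₁ hV₁)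

theorem nuclearNorm_pos {A : Matrix (Fin m) (Fin n) ℝ} (hA : A ≠ 0) : 0 < nuclearNorm A := by
  have htr : 0 < (Aᵀ * A).trace := by
    have h := trace_conjTranspose_mul_self_eq_zero_iff.not.2 hA
    rw [conjTranspose_eq_transpose_of_trivial] at h
    exact lt_of_le_of_ne (by simpa using (posSemidef_conjTranspose_mul_self A).trace_nonneg)
      (Ne.symm h)
  exact pos_of_mul_pos_right
    (htr.trans_le (trace_transpose_mul_le_l2_opNorm_mul_nuclearNorm A A)) (norm_nonneg A)

theorem nuclearNorm_add_trace_le {k : Type*} [Fintype k] [DecidableEq k]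
    {U : Matrix (Fin m) k ℝ} {V : Matrix (Fin n) k ℝ} {σ : k → ℝ} {Q : Matrix (Fin m) (Fin n) ℝ}
    (hU : Uᵀ * U = 1) (hV : Vᵀ * V = 1) (hσ : ∀ i, 0 ≤ σ i) (hQ : ‖Q‖ ≤ 1) (hUQ : Uᵀ * Q = 0)
    (hQV : Q * V = 0) (Z : Matrix (Fin m) (Fin n) ℝ) :
    nuclearNorm (U * diagonal σ * Vᵀ) + ((U * Vᵀ + Q)ᵀ * Z).trace ≤
      nuclearNorm (U * diagonal σ * Vᵀ + Z) := by
  have hQM : (Qᵀ * (U * diagonal σ * Vᵀ)).trace = 0 := by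
    have hQU : Qᵀ * U = 0 := by
      rw [← transpose_transpose U, ← transpose_mul, hUQ, transpose_zero]
    rw [Matrix.mul_assoc U, ← Matrix.mul_assoc Qᵀ, hQU, Matrix.zero_mul, trace_zero]
  have hBM : ((U * Vᵀ + Q)ᵀ * (U * diagonal σ * Vᵀ)).trace = nuclearNorm (U * diagonal σ * Vᵀ) := by
    rw [transpose_add, Matrix.add_mul, trace_add, hQM, add_zero,
      trace_transpose_mul_transpose_mul_diagonal_mul (by rw [hU, Matrix.one_mul]) hV,
      nuclearNorm_mul_diagonal_mul_transpose hU hV hσ]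
  calc nuclearNorm (U * diagonal σ * Vᵀ) + ((U * Vᵀ + Q)ᵀ * Z).trace
      = ((U * Vᵀ + Q)ᵀ * (U * diagonal σ * Vᵀ + Z)).trace := by
        rw [Matrix.mul_add, trace_add, hBM]
    _ ≤ ‖U * Vᵀ + Q‖ * nuclearNorm (U * diagonal σ * Vᵀ + Z) :=
        trace_transpose_mul_le_l2_opNorm_mul_nuclearNorm _ _
    _ ≤ nuclearNorm (U * diagonal σ * Vᵀ + Z) := mul_le_of_le_one_left (nuclearNorm_nonneg _)
        (l2_opNorm_mul_transpose_add_le_one hU hV hQ hUQ hQV)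

end NuclearNorm

section TangentSpace

variable {m n k : Type*} [Fintype m] [Fintype n] [Fintype k] [DecidableEq m] [DecidableEq n]

def projTangentOrth (U : Matrix m k ℝ) (V : Matrix n k ℝ) (Z : Matrix m n ℝ) : Matrix m n ℝ :=
  (1 - U * Uᵀ) * Z * (1 - V * Vᵀ)

variable {U : Matrix m k ℝ} {V : Matrix n k ℝ}

theorem transpose_mul_projTangentOrth [DecidableEq k] (hU : Uᵀ * U = 1) (Z : Matrix m n ℝ) :
    Uᵀ * projTangentOrth U V Z = 0 := by
  have h : Uᵀ * (1 - U * Uᵀ) = 0 := by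
    rw [Matrix.mul_sub, Matrix.mul_one, ← Matrix.mul_assoc, hU, Matrix.one_mul, sub_self]
  rw [projTangentOrth, ← Matrix.mul_assoc, ← Matrix.mul_assoc, h, Matrix.zero_mul, Matrix.zero_mul]

theorem projTangentOrth_mul [DecidableEq k] (hV : Vᵀ * V = 1) (Z : Matrix m n ℝ) :
    projTangentOrth U V Z * V = 0 := by
  have h : (1 - V * Vᵀ) * V = 0 := by
    rw [Matrix.sub_mul, Matrix.one_mul, Matrix.mul_assoc, hV, Matrix.mul_one, sub_self]
  rw [projTangentOrth, Matrix.mul_assoc, h, Matrix.mul_zero]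

theorem projTangentOrth_eq_self {W : Matrix m n ℝ} (hUW : Uᵀ * W = 0) (hWV : W * V = 0) :
    projTangentOrth U V W = W := by
  rw [projTangentOrth, Matrix.sub_mul, Matrix.one_mul, Matrix.mul_assoc, hUW, Matrix.mul_zero,
    sub_zero, Matrix.mul_sub, Matrix.mul_one, ← Matrix.mul_assoc, hWV, Matrix.zero_mul, sub_zero]

theorem trace_transpose_projTangentOrth_mul (A B : Matrix m n ℝ) :
    ((projTangentOrth U V A)ᵀ * B).trace = (Aᵀ * projTangentOrth U V B).trace := by
  have hU : (1 - U * Uᵀ)ᵀ = 1 - U * Uᵀ := by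
    rw [transpose_sub, transpose_one, transpose_mul, transpose_transpose]
  have hV : (1 - V * Vᵀ)ᵀ = 1 - V * Vᵀ := by
    rw [transpose_sub, transpose_one, transpose_mul, transpose_transpose]
  rw [projTangentOrth, projTangentOrth, transpose_mul, transpose_mul, hU, hV]
  simp only [Matrix.mul_assoc]
  conv_lhs => rw [trace_mul_comm]
  simp only [Matrix.mul_assoc]

theorem trace_transpose_mul_projTangentOrth {W : Matrix m n ℝ} (hUW : Uᵀ * W = 0)
    (hWV : W * V = 0) (Z : Matrix m n ℝ) :
    (Wᵀ * projTangentOrth U V Z).trace = (Wᵀ * Z).trace := by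
  rw [← trace_transpose_projTangentOrth_mul, projTangentOrth_eq_self hUW hWV]

theorem l2_opNorm_projTangentOrth_le [DecidableEq k] (hU : Uᵀ * U = 1) (hV : Vᵀ * V = 1)
    (Q : Matrix m n ℝ) : ‖projTangentOrth U V Q‖ ≤ ‖Q‖ :=
  calc ‖projTangentOrth U V Q‖ ≤ ‖1 - U * Uᵀ‖ * ‖Q‖ * ‖1 - V * Vᵀ‖ :=
        (l2_opNorm_mul _ _).trans (mul_le_mul_of_nonneg_right (l2_opNorm_mul _ _) (norm_nonneg _))
    _ ≤ 1 * ‖Q‖ * 1 := by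
        gcongr
        · exact l2_opNorm_one_sub_mul_transpose_le_one hU
        · exact l2_opNorm_one_sub_mul_transpose_le_one hV
    _ = ‖Q‖ := by ring

end TangentSpace

section Sampling

variable {m n : Type*} [DecidableEq m] [DecidableEq n]
  {Ω : Finset (m × n)} {PΩ : Matrix m n ℝ → Matrix m n ℝ}

theorem sampling_sub_eq_zero (hPΩ : ∀ A i j, PΩ A i j = if (i, j) ∈ Ω then A i j else 0)
    {X M : Matrix m n ℝ} (h : PΩ X = PΩ M) : PΩ (X - M) = 0 := by
  ext i j
  have hij := congrFun (congrFun h i) j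
  simp only [hPΩ] at hij ⊢
  split_ifs at hij ⊢ <;> simp [hij]

theorem trace_transpose_mul_eq_zero_of_sampling [Fintype m] [Fintype n]
    (hPΩ : ∀ A i j, PΩ A i j = if (i, j) ∈ Ω then A i j else 0) {Y Z : Matrix m n ℝ}
    (hY : PΩ Y = Y) (hZ : PΩ Z = 0) : (Yᵀ * Z).trace = 0 := by
  simp only [trace, diag, mul_apply, transpose_apply]
  refine Finset.sum_eq_zero fun j _ => Finset.sum_eq_zero fun i _ => ?_
  have hy := congrFun (congrFun hY i) j
  have hz := congrFun (congrFun hZ i) j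
  rw [hPΩ] at hy hz
  split_ifs at hy hz
  · rw [hz, Matrix.zero_apply, mul_zero]
  · rw [← hy, zero_mul]

end Sampling

theorem nnm_unique_minimizer_general (n₁ n₂ r : ℕ) (M : Matrix (Fin n₁) (Fin n₂) ℝ)
    (U : Matrix (Fin n₁) (Fin r) ℝ) (V : Matrix (Fin n₂) (Fin r) ℝ) (σ : Fin r → ℝ)
    (hU : Uᵀ * U = 1) (hV : Vᵀ * V = 1) (hσ : ∀ i, 0 < σ i)
    (hM : M = U * Matrix.diagonal σ * Vᵀ)
    (Ω : Finset (Fin n₁ × Fin n₂))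
    (PΩ : Matrix (Fin n₁) (Fin n₂) ℝ → Matrix (Fin n₁) (Fin n₂) ℝ)
    (hPΩ : ∀ A i j, PΩ A i j = if (i, j) ∈ Ω then A i j else 0)
    (hcert : ∃ Y W : Matrix (Fin n₁) (Fin n₂) ℝ,
        PΩ Y = Y ∧ Uᵀ * W = 0 ∧ W * V = 0 ∧ Y = U * Vᵀ + W ∧ matSpectralNorm W < 1)
    (hinj : ∀ Z : Matrix (Fin n₁) (Fin n₂) ℝ,
        (∀ W : Matrix (Fin n₁) (Fin n₂) ℝ, Uᵀ * W = 0 → W * V = 0 → (Wᵀ * Z).trace = 0) →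
        PΩ Z = 0 → Z = 0) :
    ∀ X : Matrix (Fin n₁) (Fin n₂) ℝ, X ≠ M → PΩ X = PΩ M →
      nuclearNorm M < nuclearNorm X := by
  subst hM
  intro X hne hX
  obtain ⟨Y, W, hY, hUW, hWV, rfl, hW⟩ := hcert
  have hZ := sampling_sub_eq_zero hPΩ hX
  set Z := X - U * diagonal σ * Vᵀ
  have hZ₂ : projTangentOrth U V Z ≠ 0 := fun h => hne <| sub_eq_zero.1 <| hinj Z
    (fun W' h₁ h₂ => by
      rw [← trace_transpose_mul_projTangentOrth h₁ h₂, h, Matrix.mul_zero, trace_zero]) hZ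
  obtain ⟨Q, hQ, hQZ⟩ := exists_l2_opNorm_le_one_trace_eq_nuclearNorm (projTangentOrth U V Z)
  have hsub := nuclearNorm_add_trace_le hU hV (fun i => (hσ i).le)
    ((l2_opNorm_projTangentOrth_le hU hV Q).trans hQ) (transpose_mul_projTangentOrth hU Q)
    (projTangentOrth_mul hV Q) Z
  have hYZ := trace_transpose_mul_eq_zero_of_sampling hPΩ hY hZ
  have hWZ := trace_transpose_mul_le_l2_opNorm_mul_nuclearNorm W (projTangentOrth U V Z)
  have hW₁ : ‖W‖ < 1 := (l2_opNorm_le_matSpectralNorm W).trans_lt hW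
  rw [trace_transpose_mul_projTangentOrth hUW hWV] at hWZ
  rw [transpose_add, Matrix.add_mul, trace_add] at hYZ hsub
  rw [trace_transpose_projTangentOrth_mul, hQZ, add_sub_cancel] at hsub
  linarith [mul_pos (sub_pos.2 hW₁) (nuclearNorm_pos hZ₂)]

/-- Uniqueness condition for nuclear norm minimization (Candès–Recht, Lemma 3.1):
if there is a dual certificate `Y = U Vᵀ + W` supported on `Ω` with `W ∈ T⊥`,
`‖W‖ < 1`, and `P_Ω` restricted to `T` is injective, then `M` is the unique
nuclear norm minimizer subject to `P_Ω(X) = P_Ω(M)`.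
Here `T⊥ = {Z : Uᵀ Z = 0 ∧ Z V = 0}` and `Z ∈ T` iff `⟨W, Z⟩ = tr(Wᵀ Z) = 0`
for all `W ∈ T⊥`. -/
theorem nnm_unique_minimizer (n₁ n₂ r : ℕ) (M : Matrix (Fin n₁) (Fin n₂) ℝ)
    (U : Matrix (Fin n₁) (Fin r) ℝ) (V : Matrix (Fin n₂) (Fin r) ℝ) (σ : Fin r → ℝ)
    (hU : Uᵀ * U = 1) (hV : Vᵀ * V = 1) (hσ : ∀ i, 0 < σ i)
    (hM : M = U * Matrix.diagonal σ * Vᵀ) (hrank : M.rank = r)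
    (Ω : Finset (Fin n₁ × Fin n₂))
    (PΩ : Matrix (Fin n₁) (Fin n₂) ℝ → Matrix (Fin n₁) (Fin n₂) ℝ)
    (hPΩ : ∀ A i j, PΩ A i j = if (i, j) ∈ Ω then A i j else 0)
    (hcert : ∃ Y W : Matrix (Fin n₁) (Fin n₂) ℝ,
        PΩ Y = Y ∧ Uᵀ * W = 0 ∧ W * V = 0 ∧ Y = U * Vᵀ + W ∧ matSpectralNorm W < 1)
    (hinj : ∀ Z : Matrix (Fin n₁) (Fin n₂) ℝ,
        (∀ W : Matrix (Fin n₁) (Fin n₂) ℝ, Uᵀ * W = 0 → W * V = 0 → (Wᵀ * Z).trace = 0) →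
        PΩ Z = 0 → Z = 0) :
    ∀ X : Matrix (Fin n₁) (Fin n₂) ℝ, X ≠ M → PΩ X = PΩ M →
      nuclearNorm M < nuclearNorm X :=
  nnm_unique_minimizer_general n₁ n₂ r M U V σ hU hV hσ hM Ω PΩ hPΩ hcert hinj
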